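/- Let g ≥ 1 and let D_g^{(2c)} be the Verlinde polynomial as above. Writing D_g^{(2c)} = ∑_j φ_j(c) p^j, the nonzero φ_j occur exactly for j ∈ {g−1, g+1, g+3, …, 3g−3} ∪ {g}, and each such φ_j is a polynomial in c of degree exactly 3g−2−j. -/

import Mathlib

open PowerSeries

/-- The even power series `s(at) = sinh(at)/(at) = ∑_k (at)^{2k}/(2k+1)!`. -/
noncomputable def sSeries (a : ℚ) : PowerSeries ℚ :=
  PowerSeries.mk fun k => if Even k then a ^ k / (k + 1).factorial else 0

/-- The power series `2pt/(e^{2pt}−1) = ∑_k B_k (2p)^k t^k / k!`. -/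
noncomputable def bSeries (p : ℚ) : PowerSeries ℚ :=
  PowerSeries.mk fun k => bernoulli k * (2 * p) ^ k / k.factorial

/-- The residue at `t = 0` of `(2pt/(e^{2pt}−1)) · (s((2c+1)t)/s(t)^{2g−1}) · dt/t^{2g−1}`. -/
noncomputable def resTerm (g : ℕ) (p c : ℚ) : ℚ :=
  PowerSeries.coeff (2 * g - 2) (bSeries p * sSeries (2 * c + 1) * (sSeries 1 ^ (2 * g - 1))⁻¹)

/-- The Verlinde number `D_g^{(2c)}` given by the residue formula. -/
noncomputable def Dval (g : ℕ) (p c : ℚ) : ℚ :=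
  ((-p) ^ g / 2) * ((4 : ℚ) ^ (1 - (g : ℤ)) * ((2 * c + 1) / p) * resTerm g p c
    - (descPochhammer ℚ (2 * g - 2)).eval (c + g - 1) / (2 * g - 2).factorial)

/-!
The series `s((2c+1)t)/s(t)^{2g-1}` is even, so in the residue only the Bernoulli numbers
`B_{2i}`, `i < g`, survive, each multiplied by the coefficient of `t^{2g-2-2i}` of that series.
That coefficient is a polynomial in `c` of degree `2g-2-2i` (its top coefficient comes from
`s((2c+1)t)` alone), and `B_{2i} ≠ 0` by Euler's formula for `ζ(2i)`. Hence the residue part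
contributes to `p^{g-1+2i}` a polynomial of degree `2g-1-2i`, while the binomial term contributes
`binom(c+g-1, 2g-2)`, of degree `2g-2`, to `p^g`, which has the other parity.
-/

open scoped Polynomial

theorem Finset.sum_range_two_mul_add_one_of_odd_eq_zero {M : Type*} [AddCommMonoid M]
    (f : ℕ → M) (n : ℕ) (h : ∀ k < 2 * n + 1, Odd k → f k = 0) :
    ∑ k ∈ Finset.range (2 * n + 1), f k = ∑ i ∈ Finset.range (n + 1), f (2 * i) := by
  induction n with
  | zero => simp
  | succ n ih =>
    rw [show 2 * (n + 1) + 1 = 2 * n + 1 + 1 + 1 by ring, Finset.sum_range_succ,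
      Finset.sum_range_succ, ih fun k hk => h k (by omega), Finset.sum_range_succ _ (n + 1),
      h (2 * n + 1) (by omega) (odd_two_mul_add_one n), add_zero, mul_add_one]

theorem MvPolynomial.eval_aeval_X {σ R : Type*} [CommSemiring R] (v : σ → R) (i : σ)
    (q : R[X]) :
    MvPolynomial.eval v (Polynomial.aeval (MvPolynomial.X i) q) = q.eval (v i) := by
  change MvPolynomial.aeval v _ = _
  rw [← Polynomial.aeval_algHom_apply, MvPolynomial.aeval_X, Polynomial.coe_aeval_eq_eval]

theorem natDegree_two_mul_X_add_one : (2 * Polynomial.X + 1 : ℚ[X]).natDegree = 1 := by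
  compute_degree!

theorem two_mul_X_add_one_ne_zero : (2 * Polynomial.X + 1 : ℚ[X]) ≠ 0 :=
  Polynomial.ne_zero_of_natDegree_gt (n := 0) (by rw [natDegree_two_mul_X_add_one]; omega)

theorem bernoulli_two_mul_ne_zero (i : ℕ) : bernoulli (2 * i) ≠ 0 := by
  rcases Nat.eq_zero_or_pos i with rfl | hi
  · simp
  · intro hB
    have hζ := riemannZeta_two_mul_nat (k := i) hi.ne'
    rw [hB] at hζ
    refine riemannZeta_ne_zero_of_one_lt_re (s := 2 * i) ?_ (by simpa using hζ)
    norm_cast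
    omega

namespace PowerSeries

theorem rescale_inv {k : Type*} [Field k] (a : k) (φ : k⟦X⟧) :
    rescale a φ⁻¹ = (rescale a φ)⁻¹ := by
  have h0 : constantCoeff (rescale a φ) = constantCoeff φ := by
    rw [← coeff_zero_eq_constantCoeff_apply, coeff_rescale, pow_zero, one_mul,
      coeff_zero_eq_constantCoeff_apply]
  by_cases h : constantCoeff φ = 0
  · rw [inv_eq_zero.mpr h, inv_eq_zero.mpr (h0.trans h), map_zero]
  · rw [eq_inv_iff_mul_eq_one (h0.trans_ne h), ← map_mul, PowerSeries.inv_mul_cancel _ h,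
      map_one]

theorem coeff_eq_zero_of_rescale_neg_one_eq {R : Type*} [CommRing R] [IsAddTorsionFree R]
    {φ : R⟦X⟧} (hφ : rescale (-1) φ = φ) {n : ℕ} (hn : Odd n) : coeff n φ = 0 := by
  rw [← self_eq_neg]
  conv_lhs => rw [← hφ]
  rw [coeff_rescale, hn.neg_one_pow, neg_one_mul]

variable {R : Type*} [CommSemiring R]

noncomputable def coeffRescaleMul (f u : R⟦X⟧) (r : ℕ) : R[X] :=
  ∑ m ∈ Finset.range (r + 1), Polynomial.C (coeff m f * coeff (r - m) u) * Polynomial.X ^ m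

theorem eval_coeffRescaleMul (f u : R⟦X⟧) (r : ℕ) (a : R) :
    (coeffRescaleMul f u r).eval a = coeff r (rescale a f * u) := by
  rw [coeffRescaleMul, Polynomial.eval_finsetSum, coeff_mul,
    Finset.Nat.sum_antidiagonal_eq_sum_range_succ (fun i j => coeff i (rescale a f) * coeff j u)]
  refine Finset.sum_congr rfl fun m _ => ?_
  simp only [Polynomial.eval_mul, Polynomial.eval_C, Polynomial.eval_pow, Polynomial.eval_X,
    coeff_rescale]
  ring

theorem natDegree_coeffRescaleMul_le (f u : R⟦X⟧) (r : ℕ) :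
    (coeffRescaleMul f u r).natDegree ≤ r :=
  Polynomial.natDegree_sum_le_of_forall_le _ _ fun _ hm =>
    (Polynomial.natDegree_C_mul_X_pow_le _ _).trans (Finset.mem_range_succ_iff.mp hm)

theorem coeff_coeffRescaleMul_self (f u : R⟦X⟧) (r : ℕ) :
    (coeffRescaleMul f u r).coeff r = coeff r f * constantCoeff u := by
  simp only [coeffRescaleMul, Polynomial.finsetSum_coeff, Polynomial.coeff_C_mul_X_pow,
    Finset.sum_ite_eq, Finset.mem_range, Nat.lt_succ_self, if_true, Nat.sub_self,
    coeff_zero_eq_constantCoeff_apply]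

theorem natDegree_coeffRescaleMul {f u : R⟦X⟧} {r : ℕ}
    (h : coeff r f * constantCoeff u ≠ 0) :
    (coeffRescaleMul f u r).natDegree = r :=
  Polynomial.natDegree_eq_of_le_of_coeff_ne_zero (natDegree_coeffRescaleMul_le f u r)
    (by rwa [coeff_coeffRescaleMul_self])

end PowerSeries

open PowerSeries

theorem sSeries_eq_rescale (a : ℚ) : sSeries a = rescale a (sSeries 1) := by
  ext n
  simp [sSeries, coeff_rescale, div_eq_mul_inv]

theorem rescale_neg_one_sSeries (a : ℚ) : rescale (-1) (sSeries a) = sSeries a := by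
  ext n
  rw [coeff_rescale, sSeries, coeff_mk]
  split_ifs with hn
  · rw [hn.neg_one_pow, one_mul]
  · rw [mul_zero]

theorem constantCoeff_sSeries (a : ℚ) : constantCoeff (sSeries a) = 1 := by
  simp [sSeries, ← coeff_zero_eq_constantCoeff_apply]

theorem coeff_sSeries_mul_inv_pow_of_odd (a b : ℚ) (m : ℕ) {n : ℕ} (hn : Odd n) :
    coeff n (sSeries a * (sSeries b ^ m)⁻¹) = 0 :=
  coeff_eq_zero_of_rescale_neg_one_eq (by
    rw [map_mul, rescale_inv, map_pow, rescale_neg_one_sSeries, rescale_neg_one_sSeries]) hn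

noncomputable def sRatioCoeff (g r : ℕ) : ℚ[X] :=
  (coeffRescaleMul (sSeries 1) (sSeries 1 ^ (2 * g - 1))⁻¹ r).comp (2 * Polynomial.X + 1)

theorem eval_sRatioCoeff (g r : ℕ) (c : ℚ) :
    (sRatioCoeff g r).eval c =
      coeff r (sSeries (2 * c + 1) * (sSeries 1 ^ (2 * g - 1))⁻¹) := by
  simp [sRatioCoeff, Polynomial.eval_comp, eval_coeffRescaleMul, ← sSeries_eq_rescale]

theorem natDegree_sRatioCoeff_and_ne_zero (g : ℕ) {r : ℕ} (hr : Even r) :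
    (sRatioCoeff g r).natDegree = r ∧ sRatioCoeff g r ≠ 0 := by
  have htop : coeff r (sSeries 1) * constantCoeff (sSeries 1 ^ (2 * g - 1))⁻¹ ≠ 0 := by
    simp [sSeries, hr, Nat.factorial_ne_zero]
  have hP := natDegree_coeffRescaleMul htop
  refine ⟨by rw [sRatioCoeff, Polynomial.natDegree_comp, hP, natDegree_two_mul_X_add_one,
    mul_one], ?_⟩
  rw [← Polynomial.leadingCoeff_ne_zero, sRatioCoeff,
    Polynomial.leadingCoeff_comp (by simp [natDegree_two_mul_X_add_one])]
  refine mul_ne_zero ?_ (pow_ne_zero _ ?_)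
  · rwa [Polynomial.leadingCoeff, hP, coeff_coeffRescaleMul_self]
  · exact Polynomial.leadingCoeff_ne_zero.mpr two_mul_X_add_one_ne_zero

theorem resTerm_eq_sum (g : ℕ) (hg : 1 ≤ g) (p c : ℚ) :
    resTerm g p c = ∑ i ∈ Finset.range g,
      bernoulli (2 * i) * (2 * p) ^ (2 * i) / (2 * i).factorial *
        (sRatioCoeff g (2 * g - 2 - 2 * i)).eval c := by
  obtain ⟨n, rfl⟩ : ∃ n, g = n + 1 := ⟨g - 1, by omega⟩
  have hdeg : 2 * (n + 1) - 2 = 2 * n := by omega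
  rw [resTerm, hdeg, mul_assoc, coeff_mul, Finset.Nat.sum_antidiagonal_eq_sum_range_succ
    (fun k l => coeff k (bSeries p) * coeff l (sSeries (2 * c + 1) * _)),
    Nat.succ_eq_add_one, Finset.sum_range_two_mul_add_one_of_odd_eq_zero]
  · refine Finset.sum_congr rfl fun i _ => ?_
    rw [eval_sRatioCoeff, bSeries, coeff_mk]
  · intro k hk hodd
    rw [coeff_sSeries_mul_inv_pow_of_odd _ _ _ (Nat.odd_sub' (by omega) |>.mpr ?_), mul_zero]
    simpa [parity_simps] using hodd

noncomputable def binomialPhi (g : ℕ) : ℚ[X] :=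
  Polynomial.C ((-1 : ℚ) ^ (g + 1) / (2 * (2 * g - 2).factorial)) *
    (descPochhammer ℚ (2 * g - 2)).comp (Polynomial.X + Polynomial.C ((g : ℚ) - 1))

noncomputable def residuePhi (g i : ℕ) : ℚ[X] :=
  Polynomial.C ((-1 : ℚ) ^ g / 2 * 4 ^ (1 - (g : ℤ)) * bernoulli (2 * i) * 2 ^ (2 * i) /
      (2 * i).factorial) *
    ((2 * Polynomial.X + 1) * sRatioCoeff g (2 * g - 2 - 2 * i))

theorem natDegree_binomialPhi_and_ne_zero (g : ℕ) :
    (binomialPhi g).natDegree = 2 * g - 2 ∧ binomialPhi g ≠ 0 := by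
  have hC : ((-1 : ℚ) ^ (g + 1) / (2 * (2 * g - 2).factorial)) ≠ 0 := by
    have := Nat.factorial_ne_zero (2 * g - 2)
    simp [this]
  have hmonic := (monic_descPochhammer ℚ (2 * g - 2)).comp
    (Polynomial.monic_X_add_C ((g : ℚ) - 1)) (by rw [Polynomial.natDegree_X_add_C]; norm_num)
  refine ⟨?_, mul_ne_zero (Polynomial.C_ne_zero.mpr hC) hmonic.ne_zero⟩
  rw [binomialPhi, Polynomial.natDegree_C_mul hC, Polynomial.natDegree_comp,
    descPochhammer_natDegree, Polynomial.natDegree_X_add_C, mul_one]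

theorem natDegree_residuePhi_and_ne_zero (g : ℕ) {i : ℕ} (hi : i < g) :
    (residuePhi g i).natDegree = 2 * g - 1 - 2 * i ∧ residuePhi g i ≠ 0 := by
  have hC : ((-1 : ℚ) ^ g / 2 * 4 ^ (1 - (g : ℤ)) * bernoulli (2 * i) * 2 ^ (2 * i) /
      (2 * i).factorial) ≠ 0 := by
    have := Nat.factorial_ne_zero (2 * i)
    simp [this, bernoulli_two_mul_ne_zero, zpow_ne_zero]
  obtain ⟨hW, hW0⟩ := natDegree_sRatioCoeff_and_ne_zero g (r := 2 * g - 2 - 2 * i)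
    ⟨g - 1 - i, by omega⟩
  refine ⟨?_, mul_ne_zero (Polynomial.C_ne_zero.mpr hC)
    (mul_ne_zero two_mul_X_add_one_ne_zero hW0)⟩
  rw [residuePhi, Polynomial.natDegree_C_mul hC,
    Polynomial.natDegree_mul two_mul_X_add_one_ne_zero hW0, natDegree_two_mul_X_add_one, hW]
  omega

/-- `D_g^{(2c)}` as a polynomial in `p` over `ℚ[c]`: its coefficient `φ_g` is `binomialPhi g`
and `φ_{g-1+2i}` is `residuePhi g i`. -/
noncomputable def verlindePoly (g : ℕ) : ℚ[X][X] :=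
  Polynomial.C (binomialPhi g) * Polynomial.X ^ g +
    ∑ i ∈ Finset.range g, Polynomial.C (residuePhi g i) * Polynomial.X ^ (g - 1 + 2 * i)

theorem eval₂_verlindePoly (g : ℕ) (hg : 1 ≤ g) {p : ℚ} (hp : p ≠ 0) (c : ℚ) :
    (verlindePoly g).eval₂ (Polynomial.evalRingHom c) p = Dval g p c := by
  simp only [verlindePoly, Polynomial.eval₂_add, Polynomial.eval₂_finsetSum,
    Polynomial.eval₂_mul, Polynomial.eval₂_C, Polynomial.eval₂_X_pow,
    Polynomial.coe_evalRingHom]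
  rw [Dval, resTerm_eq_sum g hg, mul_sub, Finset.mul_sum, Finset.mul_sum, sub_eq_neg_add]
  congr 1
  · simp only [binomialPhi, Polynomial.eval_mul, Polynomial.eval_C, Polynomial.eval_comp,
      Polynomial.eval_add, Polynomial.eval_X]
    rw [show c + ((g : ℚ) - 1) = c + g - 1 by ring, neg_pow p, pow_succ]
    field_simp
  · refine Finset.sum_congr rfl fun i _ => ?_
    have hpow : p ^ (g - 1 + 2 * i) = p ^ g * p ^ (2 * i) / p := by
      rw [eq_div_iff hp, ← pow_succ, ← pow_add]
      congr 1
      omega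
    simp only [residuePhi, Polynomial.eval_mul, Polynomial.eval_C, Polynomial.eval_add,
      Polynomial.eval_ofNat, Polynomial.eval_X, Polynomial.eval_one]
    rw [hpow, neg_pow p, mul_pow]
    field_simp

theorem natDegree_verlindePoly_lt (g : ℕ) (hg : 1 ≤ g) :
    (verlindePoly g).natDegree < 3 * g - 1 := by
  have hle : (verlindePoly g).natDegree ≤ 3 * g - 2 :=
    Polynomial.natDegree_add_le_of_degree_le
      ((Polynomial.natDegree_C_mul_X_pow_le _ _).trans (by omega))
      (Polynomial.natDegree_sum_le_of_forall_le _ _ fun i hi =>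
        (Polynomial.natDegree_C_mul_X_pow_le _ _).trans (by rw [Finset.mem_range] at hi; omega))
  omega

theorem coeff_verlindePoly (g j : ℕ) :
    (verlindePoly g).coeff j = (if j = g then binomialPhi g else 0) +
      ∑ i ∈ Finset.range g, if j = g - 1 + 2 * i then residuePhi g i else 0 := by
  simp only [verlindePoly, Polynomial.coeff_add, Polynomial.finsetSum_coeff,
    Polynomial.coeff_C_mul_X_pow]

theorem coeff_verlindePoly_self (g : ℕ) : (verlindePoly g).coeff g = binomialPhi g := by
  rw [coeff_verlindePoly, if_pos rfl, Finset.sum_eq_zero fun i hi =>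
    if_neg (by rw [Finset.mem_range] at hi; omega), add_zero]

theorem coeff_verlindePoly_residue (g : ℕ) {i : ℕ} (hi : i < g) :
    (verlindePoly g).coeff (g - 1 + 2 * i) = residuePhi g i := by
  rw [coeff_verlindePoly, if_neg (by omega), zero_add,
    Finset.sum_eq_single_of_mem i (Finset.mem_range.mpr hi) fun k _ hk => if_neg (by omega),
    if_pos rfl]

theorem coeff_verlindePoly_eq_zero (g : ℕ) {j : ℕ}
    (hres : j ∉ (Finset.range g).image (fun i => g - 1 + 2 * i)) (hj : j ≠ g) :
    (verlindePoly g).coeff j = 0 := by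
  rw [coeff_verlindePoly, if_neg hj, zero_add]
  refine Finset.sum_eq_zero fun i hi => if_neg fun h => hres ?_
  exact Finset.mem_image.mpr ⟨i, hi, h.symm⟩

theorem natDegree_coeff_verlindePoly_and_ne_zero (g : ℕ) {j : ℕ}
    (hj : j ∈ (Finset.range g).image (fun i => g - 1 + 2 * i) ∨ j = g) :
    ((verlindePoly g).coeff j).natDegree = 3 * g - 2 - j ∧ (verlindePoly g).coeff j ≠ 0 := by
  rcases hj with hres | rfl
  · obtain ⟨i, hi, rfl⟩ := Finset.mem_image.mp hres
    rw [Finset.mem_range] at hi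
    obtain ⟨hdeg, hne⟩ := natDegree_residuePhi_and_ne_zero g hi
    rw [coeff_verlindePoly_residue g hi]
    exact ⟨by omega, hne⟩
  · obtain ⟨hdeg, hne⟩ := natDegree_binomialPhi_and_ne_zero j
    rw [coeff_verlindePoly_self]
    exact ⟨by omega, hne⟩

/-- Writing `D_g^{(2c)} = ∑_j φ_j(c) p^j`, the nonzero `φ_j` occur exactly for
`j ∈ {g−1, g+1, g+3, …, 3g−3} ∪ {g}`, and each such `φ_j` has degree exactly
`3g−2−j` in `c`. -/
theorem verlinde_phi_degrees (g : ℕ) (hg : 1 ≤ g) :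
    ∃ (D : MvPolynomial (Fin 2) ℚ) (φ : ℕ → Polynomial ℚ),
      (∀ p c : ℚ, p ≠ 0 → MvPolynomial.eval ![p, c] D = Dval g p c) ∧
      D = ∑ j ∈ Finset.range (3 * g - 1),
            Polynomial.aeval (MvPolynomial.X 1) (φ j) * MvPolynomial.X 0 ^ j ∧
      (∀ j : ℕ, φ j ≠ 0 ↔ (j ∈ (Finset.range g).image (fun i => g - 1 + 2 * i) ∨ j = g)) ∧
      (∀ j : ℕ, (j ∈ (Finset.range g).image (fun i => g - 1 + 2 * i) ∨ j = g) →
        (φ j).natDegree = 3 * g - 2 - j) := by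
  refine ⟨_, (verlindePoly g).coeff, fun p c hp => ?_, rfl, fun j => ⟨fun hj => ?_,
    fun hj => (natDegree_coeff_verlindePoly_and_ne_zero g hj).2⟩,
    fun j hj => (natDegree_coeff_verlindePoly_and_ne_zero g hj).1⟩
  · simp only [map_sum, map_mul, map_pow, MvPolynomial.eval_X, MvPolynomial.eval_aeval_X]
    rw [← eval₂_verlindePoly g hg hp c,
      Polynomial.eval₂_eq_sum_range' _ (natDegree_verlindePoly_lt g hg)]
    rfl
  · by_contra hnot
    exact hj (coeff_verlindePoly_eq_zero g (not_or.mp hnot).1 (not_or.mp hnot).2)
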